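/- For s ∈ (0, π̂/2), the function G_1(s) = s(1+|tan_p s|^p)(p·s + (1-p)·tan_p s) - |tan_p s|^2 is strictly negative. -/

import Mathlib

open Real

noncomputable def plPow (p u : ℝ) : ℝ := |u| ^ (p - 2) * u

noncomputable def pihat (p : ℝ) : ℝ := 2 * ∫ t in (0:ℝ)..1, (1 - t ^ p) ^ (-(1 / p))

/-!
The equation conserves `|S|^p + |S'|^p = 1`. Hence the first zero `x₀` of `S'` satisfies
`π̂ = 2 x₀`: the substitution `t = S y` turns `∫₀^{x₀} dy` into `∫₀¹ (1 - t^p)^{-1/p} dt`.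
So `S' > 0` on `[0, s]` and `T = S/S'` satisfies `T' = 1 + |T|^p`, i.e. `s = arctan_p T`
with `arctan_p T = ∫₀^T du / (1 + |u|^p)`. In the variable `T` the claim becomes
`φ(T) = T² - a (1 + T^p)(p a + (1 - p) T) > 0` with `a = arctan_p T`. Now `φ(0) = 0` and
`φ' = ψ` with `ψ(0) = 0`, while `ψ'` is `p T^{p-2} / (1 + T^p)` times a quantity that is
positive because `0 < a ≤ T`.
-/

open Set MeasureTheory

section plPow

variable {p : ℝ}

lemma plPow_one (p : ℝ) : plPow p 1 = 1 := by simp [plPow]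

lemma abs_plPow (p : ℝ) {u : ℝ} (hu : u ≠ 0) : |plPow p u| = |u| ^ (p - 1) := by
  rw [plPow, abs_mul, abs_of_nonneg (rpow_nonneg (abs_nonneg u) _),
    ← rpow_add_one (abs_ne_zero.2 hu)]
  ring_nf

lemma plPow_pos_iff {u : ℝ} : 0 < plPow p u ↔ 0 < u := by
  rcases eq_or_ne u 0 with rfl | hu
  · simp [plPow]
  · exact mul_pos_iff_of_pos_left (rpow_pos_of_pos (abs_pos.2 hu) _)

lemma plPow_eq_zero_iff {u : ℝ} : plPow p u = 0 ↔ u = 0 := by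
  rcases eq_or_ne u 0 with rfl | hu
  · simp [plPow]
  · simp [plPow, hu, (rpow_pos_of_pos (abs_pos.2 hu) _).ne']

lemma mul_plPow_self (hp : p ≠ 0) (u : ℝ) : u * plPow p u = |u| ^ p := by
  rcases eq_or_ne u 0 with rfl | hu
  · simp [plPow, zero_rpow hp]
  · rw [plPow, mul_left_comm, ← sq, ← sq_abs, ← rpow_natCast, ← rpow_add (abs_pos.2 hu)]
    norm_num

lemma abs_plPow_rpow_conj (hp : 1 < p) (u : ℝ) : |plPow p u| ^ (p / (p - 1)) = |u| ^ p := by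
  rcases eq_or_ne u 0 with rfl | hu
  · simp [plPow, zero_rpow (by positivity : p / (p - 1) ≠ 0), zero_rpow (by positivity : p ≠ 0)]
  · rw [abs_plPow p hu, ← rpow_mul (abs_nonneg u)]
    congr 1
    field_simp [(by linarith : p - 1 ≠ 0)]

lemma plPow_plPow_conj (hp : 1 < p) (u : ℝ) : plPow (p / (p - 1)) (plPow p u) = u := by
  rcases eq_or_ne u 0 with rfl | hu
  · simp [plPow]
  · have hp1 : p - 1 ≠ 0 := by linarith
    rw [plPow, abs_plPow p hu, plPow, ← rpow_mul (abs_nonneg u), ← mul_assoc,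
      ← rpow_add (abs_pos.2 hu), show (p - 1) * (p / (p - 1) - 2) + (p - 2) = 0 by field_simp; ring,
      rpow_zero, one_mul]

lemma hasDerivAt_plPow (p : ℝ) {v : ℝ} (hv : v ≠ 0) :
    HasDerivAt (plPow p) ((p - 1) * |v| ^ (p - 2)) v := by
  have h : HasDerivAt (fun x => |x| ^ (p - 2) * x) _ v :=
    ((hasDerivAt_abs hv).rpow_const (p := p - 2) (Or.inl (abs_ne_zero.2 hv))).mul
      (hasDerivAt_id' v)
  refine h.congr_deriv ?_
  rw [show (SignType.sign v : ℝ) * (p - 2) * |v| ^ (p - 2 - 1) * v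
      = (p - 2) * (|v| ^ (p - 2 - 1) * (SignType.sign v * v)) by ring,
    sign_mul_self, ← rpow_add_one (abs_ne_zero.2 hv), sub_add_cancel]
  ring

lemma hasDerivAt_abs_rpow_eq_plPow (hp : 1 < p) (u : ℝ) :
    HasDerivAt (fun x : ℝ => |x| ^ p) (p * plPow p u) u :=
  (hasDerivAt_abs_rpow u hp).congr_deriv (by rw [plPow, mul_assoc])

end plPow

lemma pos_of_deriv_pos {f : ℝ → ℝ} (hf : ContinuousOn f (Ici 0)) (hf0 : f 0 = 0)
    (hf' : ∀ x > 0, 0 < deriv f x) {x : ℝ} (hx : 0 < x) : 0 < f x := by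
  have hmono : StrictMonoOn f (Ici 0) :=
    strictMonoOn_of_deriv_pos (convex_Ici 0) hf fun y hy => hf' y (by simpa using hy)
  simpa [hf0] using hmono self_mem_Ici hx.le hx

section arctanP

variable {p : ℝ}

/-- The inverse function of `tan_p`. -/
noncomputable def arctanP (p T : ℝ) : ℝ := ∫ u in (0 : ℝ)..T, (1 + |u| ^ p)⁻¹

lemma continuous_inv_one_add_abs_rpow (hp : 0 ≤ p) :
    Continuous fun u : ℝ => (1 + |u| ^ p)⁻¹ :=
  (continuous_const.add ((continuous_rpow_const hp).comp continuous_abs)).inv₀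
    fun u => (by positivity : (0 : ℝ) < 1 + |u| ^ p).ne'

lemma hasDerivAt_arctanP (hp : 0 ≤ p) (T : ℝ) :
    HasDerivAt (arctanP p) (1 + |T| ^ p)⁻¹ T :=
  ((continuous_inv_one_add_abs_rpow hp).integral_hasStrictDerivAt 0 T).hasDerivAt

lemma continuous_arctanP (hp : 0 ≤ p) : Continuous (arctanP p) :=
  continuous_iff_continuousAt.2 fun T => (hasDerivAt_arctanP hp T).continuousAt

@[simp] lemma arctanP_zero : arctanP p 0 = 0 := intervalIntegral.integral_same

lemma arctanP_pos (hp : 0 ≤ p) {T : ℝ} (hT : 0 < T) : 0 < arctanP p T :=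
  intervalIntegral.intervalIntegral_pos_of_pos_on
    ((continuous_inv_one_add_abs_rpow hp).intervalIntegrable _ _) (fun u _ => by positivity) hT

lemma arctanP_le (hp : 0 ≤ p) {T : ℝ} (hT : 0 ≤ T) : arctanP p T ≤ T := by
  have h := intervalIntegral.integral_mono_on (μ := volume) (g := fun _ => (1 : ℝ)) hT
    ((continuous_inv_one_add_abs_rpow hp).intervalIntegrable _ _) intervalIntegrable_const
    fun u _ => inv_le_one_of_one_le₀ (le_add_of_nonneg_right (by positivity))
  simpa [arctanP] using h

/-- `-G₁(s)` written in the variable `T = tan_p s`, i.e. with `s = arctanP p T`. -/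
noncomputable def g1Defect (p T : ℝ) : ℝ :=
  T ^ 2 - arctanP p T * (1 + T ^ p) * (p * arctanP p T + (1 - p) * T)

noncomputable def g1DefectDeriv (p T : ℝ) : ℝ :=
  (p + 1) * (T - arctanP p T) + (p ^ 2 - 1) * arctanP p T * T ^ p
    - p ^ 2 * arctanP p T ^ 2 * T ^ (p - 1)

lemma continuous_g1Defect (hp : 0 ≤ p) : Continuous (g1Defect p) := by
  have := continuous_arctanP hp
  have := continuous_rpow_const hp
  unfold g1Defect
  fun_prop

lemma continuous_g1DefectDeriv (hp : 1 ≤ p) : Continuous (g1DefectDeriv p) := by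
  have := continuous_arctanP (by linarith : 0 ≤ p)
  have := continuous_rpow_const (by linarith : 0 ≤ p)
  have := continuous_rpow_const (by linarith : 0 ≤ p - 1)
  unfold g1DefectDeriv
  fun_prop

lemma hasDerivAt_g1Defect (hp : 0 ≤ p) {T : ℝ} (hT : 0 < T) :
    HasDerivAt (g1Defect p) (g1DefectDeriv p T) T := by
  have hA : HasDerivAt (arctanP p) (1 + T ^ p)⁻¹ T := by
    simpa [abs_of_pos hT] using hasDerivAt_arctanP hp T
  have hB : HasDerivAt (fun T : ℝ => 1 + T ^ p) (p * T ^ (p - 1)) T :=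
    (hasDerivAt_rpow_const (Or.inl hT.ne')).const_add 1
  have h : HasDerivAt (g1Defect p) _ T := (hasDerivAt_pow 2 T).sub ((hA.mul hB).mul
    ((hA.const_mul p).add ((hasDerivAt_id' T).const_mul (1 - p))))
  refine h.congr_deriv ?_
  have hTp : T ^ p = T ^ (p - 1) * T := by rw [← rpow_add_one hT.ne', sub_add_cancel]
  have hB0 : 1 + T ^ p ≠ 0 := by positivity
  rw [Pi.mul_apply, g1DefectDeriv]
  field_simp
  rw [hTp]
  ring

lemma deriv_g1DefectDeriv_factor_pos {a T x : ℝ} (hp : 1 < p) (ha : 0 < a) (haT : a ≤ T)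
    (hx : 0 < x) :
    0 < (p + 1) * T ^ 2 + a * T * ((p ^ 2 - 1) * (1 + x) - 2 * p)
      - p * (p - 1) * a ^ 2 * (1 + x) := by
  have hT : 0 < T := ha.trans_le haT
  have hp1 : 0 < p - 1 := by linarith
  have hTa : 0 ≤ T - a := by linarith
  refine pos_of_mul_pos_right (a := T) ?_ hT.le
  calc 0 < (T - a) * ((p + 1) * T ^ 2) + a * ((p - 1) * T ^ 2 * x)
        + p * (p - 1) * (1 + x) * T * (a * (T - a)) := by positivity
    _ = _ := by ring

lemma deriv_g1DefectDeriv_pos (hp : 1 < p) {T : ℝ} (hT : 0 < T) :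
    0 < deriv (g1DefectDeriv p) T := by
  have hA : HasDerivAt (arctanP p) (1 + T ^ p)⁻¹ T := by
    simpa [abs_of_pos hT] using hasDerivAt_arctanP (by linarith) T
  have hTp : HasDerivAt (fun T : ℝ => T ^ p) (p * T ^ (p - 1)) T :=
    hasDerivAt_rpow_const (Or.inl hT.ne')
  have hTp1 : HasDerivAt (fun T : ℝ => T ^ (p - 1)) ((p - 1) * T ^ (p - 1 - 1)) T :=
    hasDerivAt_rpow_const (Or.inl hT.ne')
  have h : HasDerivAt (g1DefectDeriv p) _ T :=
    ((((hasDerivAt_id' T).sub hA).const_mul (p + 1)).add ((hA.const_mul (p ^ 2 - 1)).mul hTp)).sub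
      (((hA.pow 2).const_mul (p ^ 2)).mul hTp1)
  rw [h.deriv]
  set a := arctanP p T
  set z := T ^ (p - 2)
  have h1 : T ^ (p - 1) = z * T := by rw [← rpow_add_one hT.ne']; ring_nf
  have h2 : T ^ p = z * T * T := by rw [← h1, ← rpow_add_one hT.ne', sub_add_cancel]
  have hB0 : 1 + T ^ p ≠ 0 := by positivity
  have hpos : 0 < p * z / (1 + T ^ p) * ((p + 1) * T ^ 2
      + a * T * ((p ^ 2 - 1) * (1 + T ^ p) - 2 * p) - p * (p - 1) * a ^ 2 * (1 + T ^ p)) :=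
    mul_pos (by positivity) (deriv_g1DefectDeriv_factor_pos hp (arctanP_pos (by linarith) hT)
      (arctanP_le (by linarith) hT.le) (by positivity))
  convert hpos using 1
  rw [Pi.pow_apply, show p - 1 - 1 = p - 2 by ring]
  field_simp
  rw [h1, h2]
  ring

lemma g1DefectDeriv_pos (hp : 1 < p) {T : ℝ} (hT : 0 < T) : 0 < g1DefectDeriv p T :=
  pos_of_deriv_pos (continuous_g1DefectDeriv hp.le).continuousOn
    (by simp [g1DefectDeriv, zero_rpow (by linarith : p ≠ 0), zero_rpow (by linarith : p - 1 ≠ 0)])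
    (fun _ hx => deriv_g1DefectDeriv_pos hp hx) hT

lemma g1Defect_pos (hp : 1 < p) {T : ℝ} (hT : 0 < T) : 0 < g1Defect p T :=
  pos_of_deriv_pos (continuous_g1Defect (by linarith)).continuousOn (by simp [g1Defect])
    (fun _ hx => by
      rw [(hasDerivAt_g1Defect (by linarith) hx).deriv]; exact g1DefectDeriv_pos hp hx) hT

end arctanP

section pSine

variable {p : ℝ} {S S' : ℝ → ℝ}

lemma abs_rpow_add_abs_rpow_eq (hp : 1 < p) (hd : ∀ x, HasDerivAt S (S' x) x)
    (hode : ∀ x, HasDerivAt (fun s => plPow p (S' s)) (-(p - 1) * plPow p (S x)) x) (x : ℝ) :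
    |S x| ^ p + |S' x| ^ p = |S 0| ^ p + |S' 0| ^ p := by
  have hq : 1 < p / (p - 1) := (one_lt_div (by linarith)).2 (by linarith)
  have hS : ∀ x, HasDerivAt (fun y => |S y| ^ p) (p * plPow p (S x) * S' x) x := fun x =>
    (hasDerivAt_abs_rpow_eq_plPow hp (S x)).comp x (hd x)
  -- `|S'|^p = |plPow p S'|^(p/(p-1))`, and `plPow p S'` is differentiated by `hode`
  have hS' : ∀ x, HasDerivAt (fun y => |S' y| ^ p) (-(p * plPow p (S x) * S' x)) x := fun x => by
    have h := (hasDerivAt_abs_rpow_eq_plPow hq (plPow p (S' x))).comp x (hode x)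
    simp only [abs_plPow_rpow_conj hp, Function.comp_def] at h
    refine h.congr_deriv ?_
    rw [plPow_plPow_conj hp]
    field_simp [(by linarith : p - 1 ≠ 0)]
  have hconst := is_const_of_deriv_eq_zero
    (fun x => ((hS x).add (hS' x)).differentiableAt)
    (fun x => ((hS x).add (hS' x)).deriv.trans (by ring))
  exact hconst x 0

lemma hasDerivAt_deriv_of_ne_zero (hp : 1 < p)
    (hode : ∀ x, HasDerivAt (fun s => plPow p (S' s)) (-(p - 1) * plPow p (S x)) x)
    {y : ℝ} (hy : S' y ≠ 0) :
    HasDerivAt S' (-(|S' y| ^ (2 - p) * plPow p (S y))) y := by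
  have hV : plPow p (S' y) ≠ 0 := fun h => hy (plPow_eq_zero_iff.1 h)
  have h := (hasDerivAt_plPow (p / (p - 1)) hV).comp y (hode y)
  simp only [Function.comp_def, plPow_plPow_conj hp] at h
  refine h.congr_deriv ?_
  have hp1 : p - 1 ≠ 0 := by linarith
  rw [abs_plPow p hy, ← rpow_mul (abs_nonneg _),
    show (p - 1) * (p / (p - 1) - 2) = 2 - p by field_simp; ring]
  field_simp
  ring

lemma hasDerivAt_div_deriv (hp : 1 < p) (hd : ∀ x, HasDerivAt S (S' x) x)
    (hode : ∀ x, HasDerivAt (fun s => plPow p (S' s)) (-(p - 1) * plPow p (S x)) x)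
    {y : ℝ} (hy : S' y ≠ 0) :
    HasDerivAt (fun x => S x / S' x) (1 + |S y / S' y| ^ p) y := by
  refine ((hd y).div (hasDerivAt_deriv_of_ne_zero hp hode hy) hy).congr_deriv ?_
  have ha : 0 < |S' y| := abs_pos.2 hy
  rw [mul_neg, sub_neg_eq_add, mul_left_comm (S y), mul_plPow_self (by linarith),
    abs_div, div_rpow (abs_nonneg _) ha.le, ← sq_abs (S' y), rpow_sub ha, rpow_two]
  field_simp
  rw [sq_abs]
  ring

lemma arctanP_div_deriv (hp : 1 < p) (hd : ∀ x, HasDerivAt S (S' x) x)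
    (hode : ∀ x, HasDerivAt (fun s => plPow p (S' s)) (-(p - 1) * plPow p (S x)) x)
    (h0 : S 0 = 0) {s : ℝ} (hs : 0 ≤ s) (hne : ∀ y ∈ Icc 0 s, S' y ≠ 0) :
    arctanP p (S s / S' s) = s := by
  have hderiv : ∀ y ∈ Icc 0 s, HasDerivAt (fun x => arctanP p (S x / S' x) - x) 0 y := by
    intro y hy
    have h : HasDerivAt (fun x => arctanP p (S x / S' x) - x) _ y :=
      ((hasDerivAt_arctanP (p := p) (by linarith) _).comp y
      (hasDerivAt_div_deriv hp hd hode (hne y hy))).sub (hasDerivAt_id y)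
    refine h.congr_deriv ?_
    rw [inv_mul_cancel₀ (by positivity), sub_self]
  have hconst := constant_of_has_deriv_right_zero
    (fun y hy => (hderiv y hy).continuousAt.continuousWithinAt)
    (fun y hy => (hderiv y (Ico_subset_Icc_self hy)).hasDerivWithinAt)
  simpa [h0, sub_eq_zero] using hconst s ⟨hs, le_rfl⟩

lemma pihat_eq_two_mul_of_deriv_eq_zero (hp : 0 < p) (hd : ∀ x, HasDerivAt S (S' x) x)
    (henergy : ∀ x, |S x| ^ p + |S' x| ^ p = 1) (h0 : S 0 = 0) {x₀ : ℝ} (hx₀ : 0 < x₀)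
    (hS' : ∀ y ∈ Ioo 0 x₀, 0 < S' y) (hzero : S' x₀ = 0) : pihat p = 2 * x₀ := by
  have hcont : ContinuousOn S (Icc 0 x₀) := fun x _ => (hd x).continuousAt.continuousWithinAt
  have hmono : StrictMonoOn S (Icc 0 x₀) :=
    strictMonoOn_of_hasDerivWithinAt_pos (convex_Icc 0 x₀) hcont
      (fun x _ => (hd x).hasDerivWithinAt) (by simpa only [interior_Icc] using hS')
  have hSpos : ∀ y ∈ Ioc 0 x₀, 0 < S y := fun y hy =>
    h0 ▸ hmono (left_mem_Icc.2 hx₀.le) (Ioc_subset_Icc_self hy) hy.1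
  have hSx₀ : S x₀ = 1 := by
    have h := henergy x₀
    rw [hzero, abs_zero, zero_rpow hp.ne', add_zero,
      abs_of_pos (hSpos x₀ ⟨hx₀, le_rfl⟩), ← one_rpow p] at h
    exact (rpow_left_inj (hSpos x₀ ⟨hx₀, le_rfl⟩).le zero_le_one hp.ne').1 h
  have himage : S '' Ioo 0 x₀ = Ioo 0 1 := by
    rw [hcont.image_Ioo_of_strictMonoOn hx₀.le hmono, h0, hSx₀]
  -- the change of variables `t = S y` has Jacobian `S' y = (1 - S y ^ p) ^ (1 / p)`
  have hjac : ∀ y ∈ Ioo 0 x₀, |S' y| • (1 - S y ^ p) ^ (-(1 / p)) = 1 := by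
    intro y hy
    have h := henergy y
    rw [abs_of_pos (hSpos y (Ioo_subset_Ioc_self hy)), abs_of_pos (hS' y hy)] at h
    rw [smul_eq_mul, abs_of_pos (hS' y hy), show 1 - S y ^ p = S' y ^ p by linarith,
      ← rpow_mul (hS' y hy).le, show p * -(1 / p) = -1 by field_simp, rpow_neg_one,
      mul_inv_cancel₀ (hS' y hy).ne']
  calc pihat p = 2 * ∫ t in S '' Ioo 0 x₀, (1 - t ^ p) ^ (-(1 / p)) := by
        rw [pihat, himage, intervalIntegral.integral_of_le zero_le_one,
          integral_Ioc_eq_integral_Ioo]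
    _ = 2 * ∫ _ in Ioo 0 x₀, (1 : ℝ) := by
        rw [integral_image_eq_integral_abs_deriv_smul measurableSet_Ioo
          (fun y _ => (hd y).hasDerivWithinAt) (hmono.injOn.mono Ioo_subset_Icc_self),
          setIntegral_congr_fun measurableSet_Ioo hjac]
    _ = 2 * x₀ := by simp [hx₀.le]

lemma pihat_le_two_mul_of_deriv_nonpos (hp : 1 < p) (hd : ∀ x, HasDerivAt S (S' x) x)
    (hode : ∀ x, HasDerivAt (fun s => plPow p (S' s)) (-(p - 1) * plPow p (S x)) x)
    (henergy : ∀ x, |S x| ^ p + |S' x| ^ p = 1) (h0 : S 0 = 0) (h0' : S' 0 = 1)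
    {y₀ : ℝ} (hy₀ : 0 ≤ y₀) (hS : ∀ x ∈ Ioo 0 y₀, 0 < S x) (hneg : S' y₀ ≤ 0) :
    pihat p ≤ 2 * y₀ := by
  set V := fun x => plPow p (S' x)
  have hVcont : Continuous V := continuous_iff_continuousAt.2 fun x => (hode x).continuousAt
  have hV0 : V 0 = 1 := by simp [V, h0', plPow_one]
  have hanti : StrictAntiOn V (Icc 0 y₀) :=
    strictAntiOn_of_hasDerivWithinAt_neg (convex_Icc 0 y₀) hVcont.continuousOn
      (fun x _ => (hode x).hasDerivWithinAt) fun x hx => mul_neg_of_neg_of_pos (by linarith)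
        (plPow_pos_iff.2 (hS x (by rwa [interior_Icc] at hx)))
  obtain ⟨x₀, hx₀, hVx₀⟩ : ∃ x₀ ∈ Icc 0 y₀, V x₀ = 0 :=
    intermediate_value_Icc' hy₀ hVcont.continuousOn
      ⟨not_lt.1 (mt plPow_pos_iff.1 (not_lt.2 hneg)), hV0 ▸ zero_le_one⟩
  have hx₀pos : 0 < x₀ := hx₀.1.lt_of_ne (by rintro rfl; simp [hV0] at hVx₀)
  have h := pihat_eq_two_mul_of_deriv_eq_zero (by linarith) hd henergy h0 hx₀pos
    (fun y hy => plPow_pos_iff.1 (hVx₀ ▸ hanti ⟨hy.1.le, hy.2.le.trans hx₀.2⟩ hx₀ hy.2))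
    (plPow_eq_zero_iff.1 hVx₀)
  linarith [hx₀.2]

end pSine

theorem G1_neg_general (p : ℝ) (hp : 1 < p) (S S' : ℝ → ℝ)
    (hd : ∀ x, HasDerivAt S (S' x) x)
    (hode : ∀ x, HasDerivAt (fun s => plPow p (S' s)) (-(p - 1) * plPow p (S x)) x)
    (h0 : S 0 = 0) (h0' : S' 0 = 1)
    (hpos : ∀ x ∈ Set.Ioo 0 (pihat p), 0 < S x) :
    ∀ s ∈ Set.Ioo 0 (pihat p / 2),
      s * (1 + |S s / S' s| ^ p) * (p * s + (1 - p) * (S s / S' s)) -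
        |S s / S' s| ^ 2 < 0 := by
  rintro s ⟨hs₀, hs⟩
  have henergy : ∀ x, |S x| ^ p + |S' x| ^ p = 1 := fun x => by
    rw [abs_rpow_add_abs_rpow_eq hp hd hode x, h0, h0']
    simp [zero_rpow (by linarith : p ≠ 0)]
  have hS' : ∀ y ∈ Icc 0 s, 0 < S' y := by
    rintro y ⟨hy₀, hys⟩
    by_contra! hneg
    have := pihat_le_two_mul_of_deriv_nonpos hp hd hode henergy h0 h0' hy₀
      (fun x hx => hpos x ⟨hx.1, by linarith [hx.2]⟩) hneg
    linarith
  have hT : 0 < S s / S' s := div_pos (hpos s ⟨hs₀, by linarith⟩) (hS' s ⟨hs₀.le, le_rfl⟩)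
  have key := g1Defect_pos hp hT
  rw [g1Defect, arctanP_div_deriv hp hd hode h0 hs₀.le fun y hy => (hS' y hy).ne'] at key
  rw [abs_of_pos hT]
  linarith

/-- for `s ∈ (0, π̂/2)`, with `tan_p = S_p/S_p'`,
`G₁(s) = s(1+|tan_p s|^p)(p s + (1-p) tan_p s) - |tan_p s|^2 < 0`. -/
theorem G1_neg (p : ℝ) (hp : 1 < p) (S S' : ℝ → ℝ)
    (hd : ∀ x, HasDerivAt S (S' x) x)
    (hode : ∀ x, HasDerivAt (fun s => plPow p (S' s)) (-(p - 1) * plPow p (S x)) x)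
    (h0 : S 0 = 0) (h0' : S' 0 = 1)
    (hpos : ∀ x ∈ Set.Ioo 0 (pihat p), 0 < S x) (hz : S (pihat p) = 0) :
    ∀ s ∈ Set.Ioo 0 (pihat p / 2),
      s * (1 + |S s / S' s| ^ p) * (p * s + (1 - p) * (S s / S' s)) -
        |S s / S' s| ^ 2 < 0 :=
  G1_neg_general p hp S S' hd hode h0 h0' hpos
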